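/- Let A be a σ-unital simple C*-algebra and let α : G → Aut(A) be an action of a finite group G on A. If the canonical conditional expectation E : A → A^α, E(x) = (1/|G|) Σ_{g∈G} α_g(x), has the Rokhlin property, then α has the Rokhlin property in the sense of Nawata. -/
import Mathlib


open scoped BoundedContinuousFunction
open Filter Topology

/-- An element of a `*`-algebra is *positive* when it is of the form `star y * y`.
In a C⋆-algebra this describes exactly the usual cone of positive elements. -/
def IsPositiveElem {B : Type*} [Mul B] [Star B] (x : B) : Prop := ∃ y, x = star y * y

/-- A C⋆-algebra is *σ-unital* when it contains a strictly positive element, i.e. a positive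
element `h` such that `h·B` is dense. -/
def IsSigmaUnital (B : Type*) [NonUnitalCStarAlgebra B] : Prop :=
  ∃ h : B, IsPositiveElem h ∧ closure {z : B | ∃ x : B, z = h * x} = Set.univ

/-- A C⋆-algebra is *simple* when it is nonzero and has no closed two-sided ideals besides
`⊥` and `⊤`. -/
def IsSimpleCStarAlgebra (B : Type*) [NonUnitalNonAssocRing B] [TopologicalSpace B] : Prop :=
  (∃ b : B, b ≠ 0) ∧ ∀ I : TwoSidedIdeal B, IsClosed (I : Set B) → I = ⊥ ∨ I = ⊤

section SeqAlgebra

variable {A : Type*} [NonUnitalCStarAlgebra A] {Ainf : Type*} [NonUnitalCStarAlgebra Ainf]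

/-- `π : ℓ∞(ℕ, A) → Ainf` presents `Ainf` as the sequence algebra
`A^∞ = ℓ∞(ℕ,A)/c₀(ℕ,A)`: it is a surjective `*`-homomorphism whose kernel is exactly
`c₀(ℕ,A)`, the ideal of sequences tending to `0` in norm. -/
def IsSequenceAlgebra (π : (ℕ →ᵇ A) →⋆ₙₐ[ℂ] Ainf) : Prop :=
  Function.Surjective π ∧ ∀ f : ℕ →ᵇ A, π f = 0 ↔ Tendsto (fun n => f n) atTop (𝓝 0)

/-- The canonical embedding `A → A^∞` by classes of constant sequences. -/
noncomputable def seqConst (π : (ℕ →ᵇ A) →⋆ₙₐ[ℂ] Ainf) (a : A) : Ainf :=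
  π (BoundedContinuousFunction.const ℕ a)

/-- `D(A, A^∞)`, the norm-closed linear span of `A·A^∞·A` inside `A^∞`. -/
def seqD (π : (ℕ →ᵇ A) →⋆ₙₐ[ℂ] Ainf) : Set Ainf :=
  closure (Submodule.span ℂ
    {z : Ainf | ∃ (a b : A) (x : Ainf), z = seqConst π a * x * seqConst π b} : Set Ainf)

/-- The copy `S^∞ ⊆ A^∞` of the sequence algebra of a subset `S ⊆ A`: classes of bounded
sequences taking values in `S`. -/
def seqSub (π : (ℕ →ᵇ A) →⋆ₙₐ[ℂ] Ainf) (S : Set A) : Set Ainf :=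
  {x : Ainf | ∃ f : ℕ →ᵇ A, (∀ n, f n ∈ S) ∧ π f = x}

end SeqAlgebra

section CondExp

variable {A : Type*} [NonUnitalCStarAlgebra A] {P : Type*} [NonUnitalCStarAlgebra P]
  {Ainf : Type*} [NonUnitalCStarAlgebra Ainf]

/-- `E : A → P` is a conditional expectation for the inclusion `incl : P ↪ A`: a positive
contractive linear map which restricts to the identity on `P` and is a `P`-bimodule map. -/
def IsCondExp (incl : P →⋆ₙₐ[ℂ] A) (E : A →ₗ[ℂ] P) : Prop :=
  (∀ p : P, E (incl p) = p) ∧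
  (∀ (p q : P) (x : A), E (incl p * x * incl q) = p * E x * q) ∧
  (∀ x : A, IsPositiveElem x → IsPositiveElem (E x)) ∧
  (∀ x : A, ‖E x‖ ≤ ‖x‖)

/-- `E` has finite index in the sense of Izumi: `(1/λ)·E - Id` is a positive map
for some `λ > 0`. -/
def IsFiniteIndex (incl : P →⋆ₙₐ[ℂ] A) (E : A →ₗ[ℂ] P) : Prop :=
  ∃ l : ℝ, 0 < l ∧ ∀ x : A, IsPositiveElem x → IsPositiveElem (l⁻¹ • incl (E x) - x)

/-- `Einf : A^∞ → A^∞` is the coordinatewise extension of the conditional expectation `E`. -/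
def IsInducedCondExp (π : (ℕ →ᵇ A) →⋆ₙₐ[ℂ] Ainf) (incl : P →⋆ₙₐ[ℂ] A) (E : A →ₗ[ℂ] P)
    (Einf : Ainf → Ainf) : Prop :=
  ∀ f g : ℕ →ᵇ A, (∀ n, g n = incl (E (f n))) → Einf (π f) = π g

/-- `e` is a Rokhlin element for the conditional expectation `E`, where the scalar `c`
plays the role of the Izumi–Watatani index `Index_w E = Ê**(1)` (a positive scalar when `A`
is simple and the index is finite).  The requirements are that `e` is a positive contraction
in the relative commutant `A' ∩ A^∞` such that:
(i) the class `[e]` of `e` in `N(D(A,A^∞),A^∞)/Ann(D(A,A^∞),A^∞)` is a projection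
    (equivalently, `e*e - e` annihilates `D(A,A^∞)`, as `e` is already positive);
(ii) `(Index_w E)·[E^∞(e)] = 1`, i.e. `c • Einf e` acts as the identity on `D(A,A^∞)`
    modulo the annihilator;
(iii) the map `A ∋ x ↦ [x·e]` is injective. -/
def IsRokhlinElement (π : (ℕ →ᵇ A) →⋆ₙₐ[ℂ] Ainf) (Einf : Ainf → Ainf) (c : ℝ) (e : Ainf) :
    Prop :=
  IsPositiveElem e ∧ ‖e‖ ≤ 1 ∧
  (∀ a : A, e * seqConst π a = seqConst π a * e) ∧
  (∀ d ∈ seqD π, (e * e - e) * d = 0 ∧ d * (e * e - e) = 0) ∧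
  (∀ d ∈ seqD π, (c • Einf e) * d = d ∧ d * (c • Einf e) = d) ∧
  (∀ x y : A, (∀ d ∈ seqD π,
      (seqConst π x * e - seqConst π y * e) * d = 0 ∧
      d * (seqConst π x * e - seqConst π y * e) = 0) → x = y)

/-- The Rokhlin property for a conditional expectation of finite index: there is a Rokhlin
element for it, where the scalar is the Izumi–Watatani index of `E`. -/
def HasRokhlinProperty (π : (ℕ →ᵇ A) →⋆ₙₐ[ℂ] Ainf) (Einf : Ainf → Ainf) : Prop :=
  ∃ c : ℝ, 0 < c ∧ ∃ e : Ainf, IsRokhlinElement π Einf c e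

end CondExp

section Action

variable {G : Type*} [Group G] [Fintype G] {A : Type*} [NonUnitalCStarAlgebra A]
  {Ainf : Type*} [NonUnitalCStarAlgebra Ainf]

/-- `αinf` is the coordinatewise extension to the sequence algebra `A^∞` of the action `α`. -/
def IsInducedAction (π : (ℕ →ᵇ A) →⋆ₙₐ[ℂ] Ainf) (α : G → A ≃⋆ₐ[ℂ] A)
    (αinf : G → Ainf → Ainf) : Prop :=
  ∀ (g : G) (f h : ℕ →ᵇ A), (∀ n, h n = α g (f n)) → αinf g (π f) = π h

/-- Nawata's Rokhlin property for an action `α` of a finite group `G` on a σ-unital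
C⋆-algebra `A`: there is a partition of unity `{e_g}` consisting of projections in
`(A' ∩ A^∞)/Ann(A,A^∞)` with `α_g(e_h) = e_{gh}`.  Here `e : G → A^∞` is a lift of the
family of projections; all identities defining projections, the partition of unity and the
equivariance hold modulo `Ann(A,A^∞)`, i.e. after multiplying by (constant sequences from)
`A` on either side. -/
def NawataRokhlin (π : (ℕ →ᵇ A) →⋆ₙₐ[ℂ] Ainf) (α : G → A ≃⋆ₐ[ℂ] A)
    (αinf : G → Ainf → Ainf) : Prop :=
  ∃ e : G → Ainf,
    (∀ g : G, ∀ a : A, e g * seqConst π a = seqConst π a * e g) ∧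
    (∀ g : G, ∀ a : A, (star (e g) - e g) * seqConst π a = 0 ∧
        seqConst π a * (star (e g) - e g) = 0) ∧
    (∀ g : G, ∀ a : A, (e g * e g - e g) * seqConst π a = 0 ∧
        seqConst π a * (e g * e g - e g) = 0) ∧
    (∀ a : A, (∑ g : G, e g) * seqConst π a = seqConst π a ∧
        seqConst π a * (∑ g : G, e g) = seqConst π a) ∧
    (∀ g h : G, ∀ a : A, (αinf g (e h) - e (g * h)) * seqConst π a = 0 ∧
        seqConst π a * (αinf g (e h) - e (g * h)) = 0)

end Action

section AuxLemmas

variable {A : Type*} [NonUnitalCStarAlgebra A] {Ainf : Type*} [NonUnitalCStarAlgebra Ainf]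

/-- Every selfadjoint element of a C⋆-algebra is a difference of two fourth powers. -/
theorem aux_fourth_decomp (a : A) (ha : IsSelfAdjoint a) :
    ∃ u v : A, u * (u * u) * u - v * (v * v) * v = a := by
  have q : ∀ gg : ℝ → ℝ, Continuous gg → gg 0 = 0 →
      cfcₙ gg a * cfcₙ gg a = cfcₙ (fun t => gg t * gg t) a := fun gg hc h0 =>
    (cfcₙ_mul gg gg a hc.continuousOn (by simp [h0]) hc.continuousOn (by simp [h0])).symm
  have key : ∀ gg : ℝ → ℝ, Continuous gg → gg 0 = 0 →
      (cfcₙ gg a) * (cfcₙ gg a * cfcₙ gg a) * cfcₙ gg a =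
      cfcₙ (fun t => (gg t * gg t) * (gg t * gg t)) a := by
    intro gg hc h0
    have h2 := q gg hc h0
    have h4 := q (fun t => gg t * gg t) (hc.mul hc) (by simp [h0])
    calc cfcₙ gg a * (cfcₙ gg a * cfcₙ gg a) * cfcₙ gg a
        = (cfcₙ gg a * cfcₙ gg a) * (cfcₙ gg a * cfcₙ gg a) := by
          rw [← mul_assoc, mul_assoc (cfcₙ gg a * cfcₙ gg a)]
      _ = _ := by rw [h2, h4]
  have hsq : ∀ t : ℝ, 0 ≤ t →
      (Real.sqrt (Real.sqrt t) * Real.sqrt (Real.sqrt t)) *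
        (Real.sqrt (Real.sqrt t) * Real.sqrt (Real.sqrt t)) = t := by
    intro t ht
    rw [Real.mul_self_sqrt (Real.sqrt_nonneg t), Real.mul_self_sqrt ht]
  refine ⟨cfcₙ (fun t => Real.sqrt (Real.sqrt (max t 0))) a,
          cfcₙ (fun t => Real.sqrt (Real.sqrt (max (-t) 0))) a, ?_⟩
  rw [key _ (by fun_prop) (by simp), key _ (by fun_prop) (by simp)]
  have e1 : (fun t : ℝ => (Real.sqrt (Real.sqrt (max t 0)) * Real.sqrt (Real.sqrt (max t 0))) *
      (Real.sqrt (Real.sqrt (max t 0)) * Real.sqrt (Real.sqrt (max t 0)))) = fun t => max t 0 :=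
    funext fun t => hsq _ (le_max_right _ _)
  have e2 : (fun t : ℝ => (Real.sqrt (Real.sqrt (max (-t) 0)) *
      Real.sqrt (Real.sqrt (max (-t) 0))) * (Real.sqrt (Real.sqrt (max (-t) 0)) *
      Real.sqrt (Real.sqrt (max (-t) 0)))) = fun t => max (-t) 0 :=
    funext fun t => hsq _ (le_max_right _ _)
  rw [e1, e2, ← cfcₙ_sub _ _ a (by fun_prop) (by simp) (by fun_prop) (by simp)]
  calc cfcₙ (fun t : ℝ => max t 0 - max (-t) 0) a = cfcₙ (fun t : ℝ => t) a :=
        cfcₙ_congr fun t _ => max_zero_sub_max_neg_zero_eq_self t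
    _ = a := cfcₙ_id' ℝ a

lemma seqConst_add (π : (ℕ →ᵇ A) →⋆ₙₐ[ℂ] Ainf) (a b : A) :
    seqConst π (a + b) = seqConst π a + seqConst π b := by
  rw [seqConst, seqConst, seqConst, ← map_add]
  congr 1

lemma seqConst_sub (π : (ℕ →ᵇ A) →⋆ₙₐ[ℂ] Ainf) (a b : A) :
    seqConst π (a - b) = seqConst π a - seqConst π b := by
  rw [seqConst, seqConst, seqConst, ← map_sub]
  congr 1

lemma seqConst_smul (π : (ℕ →ᵇ A) →⋆ₙₐ[ℂ] Ainf) (c : ℂ) (a : A) :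
    seqConst π (c • a) = c • seqConst π a := by
  rw [seqConst, seqConst, ← map_smul]
  congr 1

lemma seqConst_mul (π : (ℕ →ᵇ A) →⋆ₙₐ[ℂ] Ainf) (a b : A) :
    seqConst π (a * b) = seqConst π a * seqConst π b := by
  rw [seqConst, seqConst, seqConst, ← map_mul]
  congr 1

/-- Classes of constant sequences lie in `D(A, A^∞)`. -/
theorem seqConst_mem_seqD (π : (ℕ →ᵇ A) →⋆ₙₐ[ℂ] Ainf) (a : A) :
    seqConst π a ∈ seqD π := by
  refine subset_closure ?_
  have hsa : ∀ b : A, IsSelfAdjoint b → seqConst π b ∈ Submodule.span ℂ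
      {z : Ainf | ∃ (a b : A) (x : Ainf), z = seqConst π a * x * seqConst π b} := by
    intro b hb
    obtain ⟨u, v, huv⟩ := aux_fourth_decomp b hb
    have hu : seqConst π (u * (u * u) * u) ∈ Submodule.span ℂ
        {z : Ainf | ∃ (a b : A) (x : Ainf), z = seqConst π a * x * seqConst π b} :=
      Submodule.subset_span ⟨u, u, seqConst π (u * u), by
        rw [seqConst_mul, seqConst_mul]⟩
    have hv : seqConst π (v * (v * v) * v) ∈ Submodule.span ℂ
        {z : Ainf | ∃ (a b : A) (x : Ainf), z = seqConst π a * x * seqConst π b} :=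
      Submodule.subset_span ⟨v, v, seqConst π (v * v), by
        rw [seqConst_mul, seqConst_mul]⟩
    rw [← huv, seqConst_sub]
    exact sub_mem hu hv
  have hdecomp := realPart_add_I_smul_imaginaryPart a
  rw [← hdecomp, seqConst_add, seqConst_smul]
  exact add_mem (hsa _ (realPart a).2) (Submodule.smul_mem _ _ (hsa _ (imaginaryPart a).2))

/-- Post-composition of a bounded sequence with a `⋆`-algebra automorphism. -/
noncomputable def compBCF (φ : A ≃⋆ₐ[ℂ] A) (f : ℕ →ᵇ A) : ℕ →ᵇ A :=
  BoundedContinuousFunction.ofNormedAddCommGroup (fun n => φ (f n))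
    continuous_of_discreteTopology ‖f‖ (fun n => by
      rw [NonUnitalStarAlgHom.norm_map φ φ.injective]
      exact f.norm_coe_le_norm n)

@[simp] lemma compBCF_apply (φ : A ≃⋆ₐ[ℂ] A) (f : ℕ →ᵇ A) (n : ℕ) :
    compBCF φ f n = φ (f n) := rfl

end AuxLemmas

theorem nawata_rokhlin_of_rokhlin_condExp {G : Type*} [Group G] [Fintype G]
    {A Ainf : Type*} [NonUnitalCStarAlgebra A] [NonUnitalCStarAlgebra Ainf]
    -- `A` is a σ-unital simple C⋆-algebra
    (hAσ : IsSigmaUnital A) (hsimple : IsSimpleCStarAlgebra A)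
    -- `α` is an action of the finite group `G` on `A`
    (α : G → A ≃⋆ₐ[ℂ] A) (hα1 : ∀ x : A, α 1 x = x)
    (hαmul : ∀ (g h : G) (x : A), α (g * h) x = α g (α h x))
    -- `Ainf` is the sequence algebra `A^∞`, `αinf` the coordinatewise extension of `α`
    (π : (ℕ →ᵇ A) →⋆ₙₐ[ℂ] Ainf) (hπ : IsSequenceAlgebra π)
    (αinf : G → Ainf → Ainf) (hαinf : IsInducedAction π α αinf)
    -- `Einf` is the coordinatewise extension of the canonical conditional expectation
    -- `E : A → A^α`, `E(x) = (1/|G|) ∑ g, α_g(x)`, onto the fixed point algebra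
    (Einf : Ainf → Ainf)
    (hEinf : ∀ f h : ℕ →ᵇ A,
      (∀ n, h n = (Fintype.card G : ℂ)⁻¹ • ∑ g : G, α g (f n)) → Einf (π f) = π h)
    -- the canonical conditional expectation `E : A → A^α` has the Rokhlin property
    -- (its Izumi–Watatani index is `|G|`)
    (hRok : ∃ e : Ainf, IsRokhlinElement π Einf (Fintype.card G : ℝ) e) :
    -- `α` has the Rokhlin property in the sense of Nawata
    NawataRokhlin π α αinf := by
  obtain ⟨e, hpos, -, hcomm, hproj, hunit, -⟩ := hRok
  obtain ⟨hsurj, -⟩ := hπ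
  -- `αinf g` is compatible with the algebraic operations
  have hmapS : ∀ (g : G) (f : ℕ →ᵇ A), αinf g (π f) = π (compBCF (α g) f) :=
    fun g f => hαinf g f _ (fun n => rfl)
  have hconst : ∀ (g : G) (a : A), αinf g (seqConst π a) = seqConst π (α g a) :=
    fun g a => hαinf g (BoundedContinuousFunction.const ℕ a)
      (BoundedContinuousFunction.const ℕ (α g a)) (fun n => rfl)
  have hmul : ∀ (g : G) (x y : Ainf), αinf g (x * y) = αinf g x * αinf g y := by
    intro g x y
    obtain ⟨f, rfl⟩ := hsurj x
    obtain ⟨f', rfl⟩ := hsurj y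
    rw [← map_mul, hmapS, hmapS, hmapS, ← map_mul]
    congr 1
    ext n
    exact map_mul (α g) (f n) (f' n)
  have hsub : ∀ (g : G) (x y : Ainf), αinf g (x - y) = αinf g x - αinf g y := by
    intro g x y
    obtain ⟨f, rfl⟩ := hsurj x
    obtain ⟨f', rfl⟩ := hsurj y
    rw [← map_sub, hmapS, hmapS, hmapS, ← map_sub]
    congr 1
    ext n
    exact map_sub (α g) (f n) (f' n)
  have hstar : ∀ (g : G) (x : Ainf), αinf g (star x) = star (αinf g x) := by
    intro g x
    obtain ⟨f, rfl⟩ := hsurj x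
    rw [← map_star, hmapS, hmapS, ← map_star]
    congr 1
    ext n
    exact map_star (α g) (f n)
  have hzero : ∀ g : G, αinf g 0 = 0 := fun g => by simpa using hsub g 0 0
  have hcompose : ∀ (g h : G) (x : Ainf), αinf g (αinf h x) = αinf (g * h) x := by
    intro g h x
    obtain ⟨f, rfl⟩ := hsurj x
    rw [hmapS, hmapS, hmapS]
    congr 1
    ext n
    exact (hαmul g h (f n)).symm
  have hinv : ∀ (g : G) (a : A), α g (α g⁻¹ a) = a := by
    intro g a
    rw [← hαmul]
    have : g * g⁻¹ = 1 := by group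
    rw [this, hα1]
  have hcd : ∀ a : A, seqConst π a ∈ seqD π := seqConst_mem_seqD π
  have hse : star e = e := by
    obtain ⟨y, rfl⟩ := hpos
    rw [star_mul, star_star]
  -- the sum of the translates of `e` is `|G| • Einf e`
  obtain ⟨f, hf⟩ := hsurj e
  have hsum : ∑ g : G, αinf g e = (Fintype.card G : ℝ) • Einf e := by
    have hEe : Einf e = π ((Fintype.card G : ℂ)⁻¹ • ∑ g : G, compBCF (α g) f) := by
      rw [← hf]
      refine hEinf f _ (fun n => ?_)
      have h1 : (((Fintype.card G : ℂ)⁻¹ • ∑ g : G, compBCF (α g) f) : ℕ →ᵇ A) n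
          = (Fintype.card G : ℂ)⁻¹ • (∑ g : G, compBCF (α g) f) n := rfl
      rw [h1]
      congr 1
      simp
    have hsum' : ∑ g : G, αinf g e = π (∑ g : G, compBCF (α g) f) := by
      rw [map_sum]
      exact Finset.sum_congr rfl fun g _ => by rw [← hf, hmapS]
    rw [hsum', hEe, ← Complex.coe_smul, ← map_smul, smul_smul]
    have hcard : ((Fintype.card G : ℝ) : ℂ) * (Fintype.card G : ℂ)⁻¹ = 1 := by
      push_cast
      exact mul_inv_cancel₀ (Nat.cast_ne_zero.mpr Fintype.card_ne_zero)
    rw [hcard, one_smul]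
  refine ⟨fun g => αinf g e, ?_, ?_, ?_, ?_, ?_⟩
  · -- commutation with constants
    intro g a
    calc αinf g e * seqConst π a
        = αinf g e * αinf g (seqConst π (α g⁻¹ a)) := by rw [hconst, hinv]
      _ = αinf g (e * seqConst π (α g⁻¹ a)) := (hmul g _ _).symm
      _ = αinf g (seqConst π (α g⁻¹ a) * e) := by rw [hcomm]
      _ = αinf g (seqConst π (α g⁻¹ a)) * αinf g e := hmul g _ _
      _ = seqConst π a * αinf g e := by rw [hconst, hinv]
  · -- selfadjointness
    intro g a
    have h1 : star (αinf g e) = αinf g e := by rw [← hstar, hse]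
    rw [h1, sub_self, zero_mul, mul_zero]
    exact ⟨rfl, rfl⟩
  · -- idempotency modulo the annihilator
    intro g a
    constructor
    · calc (αinf g e * αinf g e - αinf g e) * seqConst π a
          = αinf g ((e * e - e) * seqConst π (α g⁻¹ a)) := by
            rw [hmul, hsub, hmul, hconst, hinv]
        _ = αinf g 0 := by rw [(hproj _ (hcd (α g⁻¹ a))).1]
        _ = 0 := hzero g
    · calc seqConst π a * (αinf g e * αinf g e - αinf g e)
          = αinf g (seqConst π (α g⁻¹ a) * (e * e - e)) := by
            rw [hmul, hsub, hmul, hconst, hinv]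
        _ = αinf g 0 := by rw [(hproj _ (hcd (α g⁻¹ a))).2]
        _ = 0 := hzero g
  · -- partition of unity
    intro a
    rw [hsum]
    exact ⟨(hunit _ (hcd a)).1, (hunit _ (hcd a)).2⟩
  · -- equivariance
    intro g h a
    rw [hcompose g h e, sub_self, zero_mul, mul_zero]
    exact ⟨rfl, rfl⟩
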